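/- Let $\mathfrak{d} \in \mathscr{R}$ be such that $\mathrm{T}_{\mathfrak{d}}$ is a semistandard $\lambda$-tableau of type $(\alpha|\beta)$. Then the diagonal coefficient satisfies $\mathfrak{a}_{\mathfrak{d},\mathfrak{d}} = |\mathrm{stab}_{C_{\t_0}}(\mathrm{T}_{\mathfrak{d}})| = |C_{\t_0} \cap \mathfrak{d}\,\mathrm{Sym}_{\alpha|\beta}\,\mathfrak{d}^{-1}|$. In particular, $\mathfrak{a}_{\mathfrak{d},\mathfrak{d}}$ is a positive integer. -/

import Mathlib

namespace SignedYoung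
open Equiv Finset
open scoped Classical

abbrev Sym (n : ℕ) := Equiv.Perm (Fin n)

/-- Index of the block of the composition `γ` containing position `i` (0-based). -/
def blockOf (γ : List ℕ) (i : ℕ) : ℕ :=
  (List.range γ.length).countP (fun j => decide ((γ.take (j + 1)).sum ≤ i))

/-- The Young subgroup of `Sym n` associated to the composition `γ`. -/
def youngSubgroup (n : ℕ) (γ : List ℕ) : Subgroup (Sym n) where
  carrier := {σ | ∀ i : Fin n, blockOf γ (σ i) = blockOf γ i}
  one_mem' := by intro i; simp
  mul_mem' := by
    intro a b ha hb i
    simp only [Equiv.Perm.mul_apply]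
    rw [ha, hb]
  inv_mem' := by
    intro a ha i
    have h := ha (a⁻¹ i)
    rw [show a (a⁻¹ i) = i from a.apply_symm_apply i] at h
    exact h.symm

/-- The subgroup `Sym_α` of the Young subgroup `Sym_{α|β}`: block-preserving permutations
fixing all points `≥ |α|`. -/
def symA (n : ℕ) (α β : List ℕ) : Set (Sym n) :=
  {σ | σ ∈ youngSubgroup n (α ++ β) ∧ ∀ i : Fin n, α.sum ≤ (i : ℕ) → σ i = i}

/-- The subgroup `Sym_β^{+|α|}`: block-preserving permutations fixing all points `< |α|`. -/
def symB (n : ℕ) (α β : List ℕ) : Set (Sym n) :=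
  {σ | σ ∈ youngSubgroup n (α ++ β) ∧ ∀ i : Fin n, (i : ℕ) < α.sum → σ i = i}

/-- Cells of the Young diagram of the composition `lam`. -/
abbrev Cell (lam : List ℕ) := (i : Fin lam.length) × Fin (lam.get i)

/-- A `lam`-tableau: a bijective labelling of the cells by `1, …, n` (here `Fin n`). -/
abbrev Tab (n : ℕ) (lam : List ℕ) := Cell lam ≃ Fin n

/-- The row stabilizer of a tableau. -/
def rowStab {n : ℕ} {lam : List ℕ} (t : Tab n lam) : Set (Sym n) :=
  {σ | ∀ a : Fin n, (t.symm (σ a)).1 = (t.symm a).1}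

/-- The column stabilizer of a tableau. -/
def colStab {n : ℕ} {lam : List ℕ} (t : Tab n lam) : Set (Sym n) :=
  {σ | ∀ a : Fin n, ((t.symm (σ a)).2 : ℕ) = ((t.symm a).2 : ℕ)}

/-- Colours `c_1 < c_2 < ⋯ < d_1 < d_2 < ⋯` (0-based). -/
abbrev Colour := Lex (ℕ ⊕ ℕ)

def cCol (k : ℕ) : Colour := toLex (Sum.inl k)

def dCol (k : ℕ) : Colour := toLex (Sum.inr k)

/-- `T` is a `lam`-tableau of type `(α|β)`: exactly `α_k` cells of colour `c_k` and
`β_k` of colour `d_k`. -/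
def HasType {lam : List ℕ} (α β : List ℕ) (T : Cell lam → Colour) : Prop :=
  (∀ k : ℕ, (Finset.univ.filter fun c => T c = cCol k).card = α.getD k 0) ∧
  (∀ k : ℕ, (Finset.univ.filter fun c => T c = dCol k).card = β.getD k 0)

/-- The colour of the number `i` under the canonical colouring by `(α|β)`. -/
def colourOfIdx (α β : List ℕ) (i : ℕ) : Colour :=
  if blockOf (α ++ β) i < α.length then cCol (blockOf (α ++ β) i)
  else dCol (blockOf (α ++ β) i - α.length)

/-- The canonical `lam`-tableau of type `(α|β)` associated to the tableau `t0`. -/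
def canonT {n : ℕ} {lam : List ℕ} (t0 : Tab n lam) (α β : List ℕ) : Cell lam → Colour :=
  fun c => colourOfIdx α β (t0 c)

/-- The action `σ · T = T ∘ t0⁻¹ ∘ σ⁻¹ ∘ t0` of `Sym n` on tableaux of type `(α|β)`,
through the fixed tableau `t0`. -/
def actT {n : ℕ} {lam : List ℕ} (t0 : Tab n lam) (σ : Sym n) (T : Cell lam → Colour) :
    Cell lam → Colour :=
  fun c => T (t0.symm (σ⁻¹ (t0 c)))

/-- `T_d = d · T_0`. -/
def TOf {n : ℕ} {lam : List ℕ} (t0 : Tab n lam) (α β : List ℕ) (d : Sym n) :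
    Cell lam → Colour :=
  actT t0 d (canonT t0 α β)

def RowSemistd {lam : List ℕ} (T : Cell lam → Colour) : Prop :=
  ∀ c c' : Cell lam, c.1 = c'.1 → (c.2 : ℕ) < (c'.2 : ℕ) → T c ≤ T c'

def ColSemistd {lam : List ℕ} (T : Cell lam → Colour) : Prop :=
  ∀ c c' : Cell lam, (c.2 : ℕ) = (c'.2 : ℕ) → c.1 < c'.1 → T c ≤ T c'

/-- Repeats in a row occur only for colours `c_k`. -/
def RowRepeatC {lam : List ℕ} (T : Cell lam → Colour) : Prop :=
  ∀ c c' : Cell lam, c.1 = c'.1 → (c.2 : ℕ) ≠ (c'.2 : ℕ) → T c = T c' → ∃ k, T c = cCol k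

/-- Repeats in a column occur only for colours `d_k`. -/
def ColRepeatD {lam : List ℕ} (T : Cell lam → Colour) : Prop :=
  ∀ c c' : Cell lam, (c.2 : ℕ) = (c'.2 : ℕ) → c.1 ≠ c'.1 → T c = T c' → ∃ k, T c = dCol k

def IsSemistd {lam : List ℕ} (T : Cell lam → Colour) : Prop :=
  RowSemistd T ∧ ColSemistd T ∧ RowRepeatC T ∧ ColRepeatD T

/-- A standard tableau: strictly increasing along rows and down columns. -/
def IsStd {n : ℕ} {lam : List ℕ} (t : Tab n lam) : Prop :=
  (∀ c c' : Cell lam, c.1 = c'.1 → (c.2 : ℕ) < (c'.2 : ℕ) → t c < t c') ∧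
  (∀ c c' : Cell lam, (c.2 : ℕ) = (c'.2 : ℕ) → c.1 < c'.1 → t c < t c')

def IsPartition (n : ℕ) (lam : List ℕ) : Prop :=
  lam.Pairwise (· ≥ ·) ∧ (∀ x ∈ lam, 0 < x) ∧ lam.sum = n

def IsBicomp (n : ℕ) (α β : List ℕ) : Prop :=
  (∀ x ∈ α, 0 < x) ∧ (∀ x ∈ β, 0 < x) ∧ α.sum + β.sum = n

/-- `𝒮 = {d : d⁻¹ R_{t0} d ∩ Sym_{α|β} ⊆ Sym_α}`. -/
def RSet {n : ℕ} {lam : List ℕ} (t0 : Tab n lam) (α β : List ℕ) : Set (Sym n) :=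
  {d | ∀ σ ∈ rowStab t0, d⁻¹ * σ * d ∈ youngSubgroup n (α ++ β) →
    d⁻¹ * σ * d ∈ symA n α β}

/-- `𝒞 = {d : d⁻¹ C_{t0} d ∩ Sym_{α|β} ⊆ Sym_β^{+|α|}}`. -/
def CSet {n : ℕ} {lam : List ℕ} (t0 : Tab n lam) (α β : List ℕ) : Set (Sym n) :=
  {d | ∀ σ ∈ colStab t0, d⁻¹ * σ * d ∈ youngSubgroup n (α ++ β) →
    d⁻¹ * σ * d ∈ symB n α β}

/-- The double coset `R_{t0} x Sym_{α|β}`. -/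
def dCoset {n : ℕ} {lam : List ℕ} (t0 : Tab n lam) (α β : List ℕ) (x : Sym n) :
    Set (Sym n) :=
  {ω | ∃ τ ∈ rowStab t0, ∃ ξ ∈ youngSubgroup n (α ++ β), ω = τ * x * ξ}

/-- The double coset `C_{t0} x Sym_{α|β}`. -/
def cCoset {n : ℕ} {lam : List ℕ} (t0 : Tab n lam) (α β : List ℕ) (x : Sym n) :
    Set (Sym n) :=
  {ω | ∃ σ ∈ colStab t0, ∃ ξ ∈ youngSubgroup n (α ++ β), ω = σ * x * ξ}

/-- `ε` is the sign function `ε_𝔡` on the double coset `R_{t0} 𝔡 Sym_{α|β}`: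
`ε(τ 𝔡 ξ_α ξ_β^{+|α|}) = sgn ξ_β`. -/
def IsEps {n : ℕ} {lam : List ℕ} (t0 : Tab n lam) (α β : List ℕ) (𝔡 : Sym n)
    (ε : Sym n → ℤ) : Prop :=
  ∀ τ ∈ rowStab t0, ∀ ξa ∈ symA n α β, ∀ ξb ∈ symB n α β,
    ε (τ * 𝔡 * (ξa * ξb)) = (Equiv.Perm.sign ξb : ℤ)

/-- The coefficient `𝔞_{d,𝔡} = ∑_{σ ∈ C_{t0}, σd ∈ R_{t0} 𝔡 Sym_{α|β}} sgn(σ) ε_𝔡(σ d)`. -/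
noncomputable def coeffA {n : ℕ} {lam : List ℕ} (t0 : Tab n lam) (α β : List ℕ)
    (ε : Sym n → ℤ) (d 𝔡 : Sym n) : ℤ :=
  ∑ σ : Sym n, if σ ∈ colStab t0 ∧ σ * d ∈ dCoset t0 α β 𝔡
    then (Equiv.Perm.sign σ : ℤ) * ε (σ * d) else 0

/-- The multiset of colours in column `j` of `T`. -/
def colMul {lam : List ℕ} (T : Cell lam → Colour) (j : ℕ) : Multiset Colour :=
  (Finset.univ.filter fun c : Cell lam => (c.2 : ℕ) = j).val.map T

noncomputable def sortedCol (m : Multiset Colour) : List Colour := m.sort (· ≤ ·)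

/-- Comparison of column multisets: the sorted lists agree up to position `k`, where
the first is larger. -/
def msGT (m m' : Multiset Colour) : Prop :=
  ∃ k, (∀ s, s < k → (sortedCol m).getD s (cCol 0) = (sortedCol m').getD s (cCol 0)) ∧
    (sortedCol m').getD k (cCol 0) < (sortedCol m).getD k (cCol 0)

/-- The strict column-dominance order `T ⊳ T'`. -/
def TabGT {lam : List ℕ} (T T' : Cell lam → Colour) : Prop :=
  ∃ t, (∀ j, j < t → colMul T j = colMul T' j) ∧ msGT (colMul T t) (colMul T' t)

/-- The column-dominance pre-order `T ⊵ T'`. -/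
def TabGE {lam : List ℕ} (T T' : Cell lam → Colour) : Prop :=
  (∀ j, colMul T j = colMul T' j) ∨ TabGT T T'


/-!
For `σ` in the column group, `σ 𝔡` lies in the double coset `R_{t0} 𝔡 Sym_{α|β}` exactly when
`σ` fixes `T_𝔡`: writing `σ 𝔡 = τ 𝔡 ξ`, the tableau `σ · T_𝔡 = τ · T_𝔡` is obtained from `T_𝔡`
both by permuting within rows and by permuting within columns, and a row-semistandard tableau is
the only such tableau. Since a colour `c_k` never repeats in a column of `T_𝔡`, such a `σ`
conjugates by `𝔡` into `Sym_β^{+|α|}`, so its term is `sgn σ · sgn (𝔡⁻¹ σ 𝔡) = 1`. The sum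
therefore counts the stabiliser of `T_𝔡` in `C_{t0}`, which contains `1`.
-/

lemma sum_take_le_sum_take (γ : List ℕ) {a b : ℕ} (h : a ≤ b) :
    (γ.take a).sum ≤ (γ.take b).sum :=
  (List.take_sublist_take_left h).sum_le_sum fun _ _ => Nat.zero_le _

lemma blockOf_lt_iff {γ : List ℕ} {k : ℕ} (hk : k ≤ γ.length) (i : ℕ) :
    blockOf γ i < k ↔ i < (γ.take k).sum := by
  unfold blockOf
  constructor
  · intro hlt
    by_contra! hge
    have hall : (List.range k).countP (fun j => decide ((γ.take (j + 1)).sum ≤ i)) = k := by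
      rw [List.countP_eq_length.2 fun j hj => ?_, List.length_range]
      exact decide_eq_true ((sum_take_le_sum_take γ (List.mem_range.1 hj)).trans hge)
    have := (List.range_sublist.2 hk).countP_le (p := fun j => decide ((γ.take (j + 1)).sum ≤ i))
    omega
  · intro hlt
    have hk0 : 0 < k := by
      rcases k with _ | k
      · simp at hlt
      · omega
    have hsub : (List.range γ.length).filter (fun j => decide ((γ.take (j + 1)).sum ≤ i)) ⊆
        List.range (k - 1) := by
      intro j hj
      simp only [List.mem_filter, decide_eq_true_eq, List.mem_range] at hj ⊢
      have : ¬ k ≤ j + 1 := fun h => (hj.2.trans_lt hlt).not_ge (sum_take_le_sum_take γ h)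
      omega
    have := ((List.nodup_range.filter _).subperm hsub).length_le
    rw [List.length_range] at this
    rw [List.countP_eq_length_filter]
    omega

lemma blockOf_append_lt_length_iff (α β : List ℕ) (i : ℕ) :
    blockOf (α ++ β) i < α.length ↔ i < α.sum := by
  rw [blockOf_lt_iff (by simp), List.take_left]

lemma cCol_ne_dCol (k l : ℕ) : cCol k ≠ dCol l := by
  simp [cCol, dCol]

lemma colourOfIdx_eq_iff (α β : List ℕ) (i i' : ℕ) :
    colourOfIdx α β i = colourOfIdx α β i' ↔ blockOf (α ++ β) i = blockOf (α ++ β) i' := by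
  unfold colourOfIdx
  split_ifs <;> simp [cCol, dCol] <;> omega

lemma colourOfIdx_of_lt_sum (α β : List ℕ) {i : ℕ} (h : i < α.sum) :
    colourOfIdx α β i = cCol (blockOf (α ++ β) i) :=
  if_pos ((blockOf_append_lt_length_iff α β i).2 h)

section Tableaux

variable {n : ℕ} {lam : List ℕ} {α β : List ℕ}

lemma mem_youngSubgroup_iff_colourOfIdx {ξ : Sym n} :
    ξ ∈ youngSubgroup n (α ++ β) ↔ ∀ x : Fin n, colourOfIdx α β (ξ x) = colourOfIdx α β x := by
  simp only [colourOfIdx_eq_iff]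
  rfl

lemma conj_mem_youngSubgroup_iff {𝔡 σ : Sym n} :
    𝔡⁻¹ * σ * 𝔡 ∈ youngSubgroup n (α ++ β) ↔ ∃ ξ ∈ youngSubgroup n (α ++ β), σ = 𝔡 * ξ * 𝔡⁻¹ :=
  ⟨fun h => ⟨_, h, by group⟩,
    fun ⟨ξ, hξ, h⟩ => by rwa [h, show 𝔡⁻¹ * (𝔡 * ξ * 𝔡⁻¹) * 𝔡 = ξ by group]⟩

lemma Cell.ext {c d : Cell lam} (h1 : c.1 = d.1) (h2 : (c.2 : ℕ) = d.2) : c = d :=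
  Sigma.ext h1 ((Fin.heq_ext_iff (congrArg _ h1)).2 h2)

lemma eq_of_card_row_eq_of_card_col_eq {A B : Finset (Cell lam)}
    (hA : ∀ c d : Cell lam, c.1 = d.1 → (c.2 : ℕ) ≤ d.2 → d ∈ A → c ∈ A)
    (hrow : ∀ i, (B.filter fun c => c.1 = i).card = (A.filter fun c => c.1 = i).card)
    (hcol : ∀ j : ℕ, (B.filter fun c => (c.2 : ℕ) = j).card =
      (A.filter fun c => (c.2 : ℕ) = j).card) :
    B = A := by
  have hcolEq : ∀ j : ℕ, (B.filter fun c => (c.2 : ℕ) = j) = A.filter fun c => (c.2 : ℕ) = j := by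
    intro j
    induction j using Nat.strong_induction_on with
    | _ j ih =>
    refine eq_of_subset_of_card_le (fun c hc => ?_) (hcol j).ge
    rw [mem_filter] at hc ⊢
    refine ⟨?_, hc.2⟩
    by_contra hcA
    -- The row of `c` in `A` ends before column `j`, so by induction it lies in `B`, which
    -- also contains `c`: `B` would have more cells than `A` in that row.
    have hsub : A.filter (fun d => d.1 = c.1) ⊆ B.filter (fun d => d.1 = c.1) := by
      intro d hd
      rw [mem_filter] at hd ⊢
      have hdj : (d.2 : ℕ) < j := by
        by_contra! h
        exact hcA (hA c d hd.2.symm (hc.2 ▸ h) hd.1)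
      have hdB : d ∈ B.filter fun c => (c.2 : ℕ) = d.2 := by
        rw [ih _ hdj, mem_filter]
        exact ⟨hd.1, rfl⟩
      exact ⟨(mem_filter.1 hdB).1, hd.2⟩
    have hlt := card_lt_card ((ssubset_iff_of_subset hsub).2
      ⟨c, mem_filter.2 ⟨hc.1, rfl⟩, fun h => hcA (mem_filter.1 h).1⟩)
    exact hlt.ne' (hrow c.1)
  ext c
  simpa using congrArg (c ∈ ·) (hcolEq c.2)

lemma eq_of_rowSemistd_of_card_row_le_of_card_col_le {S T : Cell lam → Colour}
    (hT : RowSemistd T)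
    (hrow : ∀ (v : Colour) (i : Fin lam.length),
      ((univ.filter fun c => S c ≤ v).filter fun c => c.1 = i).card =
        ((univ.filter fun c => T c ≤ v).filter fun c => c.1 = i).card)
    (hcol : ∀ (v : Colour) (j : ℕ),
      ((univ.filter fun c => S c ≤ v).filter fun c => (c.2 : ℕ) = j).card =
        ((univ.filter fun c => T c ≤ v).filter fun c => (c.2 : ℕ) = j).card) :
    S = T := by
  have hlevel (v : Colour) : (univ.filter fun c => S c ≤ v) = univ.filter fun c => T c ≤ v := by
    refine eq_of_card_row_eq_of_card_col_eq (fun c d hcd hle hd => ?_) (hrow v) (hcol v)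
    rw [mem_filter] at hd ⊢
    refine ⟨mem_univ c, ?_⟩
    rcases hle.lt_or_eq with hlt | heq
    · exact (hT c d hcd hlt).trans hd.2
    · exact Cell.ext hcd heq ▸ hd.2
  funext c
  have hmem (v : Colour) : S c ≤ v ↔ T c ≤ v := by simpa using congrArg (c ∈ ·) (hlevel v)
  exact le_antisymm ((hmem _).2 le_rfl) ((hmem _).1 le_rfl)

variable (t0 : Tab n lam)

lemma one_mem_rowStab : (1 : Sym n) ∈ rowStab t0 := fun _ => rfl

lemma one_mem_colStab : (1 : Sym n) ∈ colStab t0 := fun _ => rfl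

lemma one_mem_symA : (1 : Sym n) ∈ symA n α β :=
  ⟨Subgroup.one_mem _, fun _ _ => rfl⟩

lemma actT_one (T : Cell lam → Colour) : actT t0 1 T = T := by
  funext c
  simp [actT]

lemma actT_mul (σ τ : Sym n) (T : Cell lam → Colour) :
    actT t0 (σ * τ) T = actT t0 σ (actT t0 τ T) := by
  funext c
  simp [actT]

lemma actT_conj_eq_iff {g σ : Sym n} {T : Cell lam → Colour} :
    actT t0 σ (actT t0 g T) = actT t0 g T ↔ actT t0 (g⁻¹ * σ * g) T = T := by
  constructor
  · intro h
    rw [actT_mul, actT_mul, h, ← actT_mul, inv_mul_cancel, actT_one]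
  · intro h
    calc actT t0 σ (actT t0 g T) = actT t0 (g * (g⁻¹ * σ * g)) T := by rw [← actT_mul]; group
      _ = actT t0 g T := by rw [actT_mul, h]

lemma actT_canonT_eq_iff {ξ : Sym n} :
    actT t0 ξ (canonT t0 α β) = canonT t0 α β ↔ ξ ∈ youngSubgroup n (α ++ β) := by
  rw [← inv_mem_iff, mem_youngSubgroup_iff_colourOfIdx, funext_iff, t0.forall_congr_left]
  simp [actT, canonT]

lemma actT_TOf_eq_iff {𝔡 σ : Sym n} :
    actT t0 σ (TOf t0 α β 𝔡) = TOf t0 α β 𝔡 ↔ 𝔡⁻¹ * σ * 𝔡 ∈ youngSubgroup n (α ++ β) := by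
  rw [TOf, actT_conj_eq_iff, actT_canonT_eq_iff]

lemma TOf_symm_apply (𝔡 : Sym n) (i : Fin n) :
    TOf t0 α β 𝔡 (t0.symm (𝔡 i)) = colourOfIdx α β i := by
  simp [TOf, actT, canonT]

lemma card_filter_actT {ι : Type*} [DecidableEq ι] {σ : Sym n} (f : Cell lam → ι)
    (hσ : ∀ a, f (t0.symm (σ a)) = f (t0.symm a)) (T : Cell lam → Colour)
    (Q : Colour → Prop) [DecidablePred Q] (i : ι) :
    ((univ.filter fun c => Q (actT t0 σ T c)).filter fun c => f c = i).card =
      ((univ.filter fun c => Q (T c)).filter fun c => f c = i).card := by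
  refine card_equiv ((t0.trans (σ⁻¹ : Sym n)).trans t0.symm) fun c => ?_
  have hf : f (t0.symm (σ⁻¹ (t0 c))) = f c := by simpa using (hσ (σ⁻¹ (t0 c))).symm
  simp only [mem_filter, mem_univ, true_and]
  simp only [actT, Equiv.trans_apply, hf]

lemma actT_eq_self_of_rowSemistd {T : Cell lam → Colour} (hT : RowSemistd T) {τ σ : Sym n}
    (hτ : τ ∈ rowStab t0) (hσ : σ ∈ colStab t0) (h : actT t0 σ T = actT t0 τ T) :
    actT t0 τ T = T :=
  eq_of_rowSemistd_of_card_row_le_of_card_col_le hT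
    (fun v i => card_filter_actT t0 Sigma.fst hτ T (· ≤ v) i)
    (fun v j => h ▸ card_filter_actT t0 (fun c => (c.2 : ℕ)) hσ T (· ≤ v) j)

variable {𝔡 : Sym n}

lemma mul_mem_dCoset_iff (hT : RowSemistd (TOf t0 α β 𝔡)) {σ : Sym n} (hσ : σ ∈ colStab t0) :
    σ * 𝔡 ∈ dCoset t0 α β 𝔡 ↔ actT t0 σ (TOf t0 α β 𝔡) = TOf t0 α β 𝔡 := by
  constructor
  · rintro ⟨τ, hτ, ξ, hξ, heq⟩
    have hfix : actT t0 (𝔡 * ξ * 𝔡⁻¹) (TOf t0 α β 𝔡) = TOf t0 α β 𝔡 := by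
      rw [actT_TOf_eq_iff]
      simpa [mul_assoc] using hξ
    have hστ : actT t0 σ (TOf t0 α β 𝔡) = actT t0 τ (TOf t0 α β 𝔡) := by
      rw [show σ = τ * (𝔡 * ξ * 𝔡⁻¹) by rw [← mul_assoc, ← mul_assoc, ← heq]; group,
        actT_mul, hfix]
    exact hστ.trans (actT_eq_self_of_rowSemistd t0 hT hτ hσ hστ)
  · exact fun h => ⟨1, one_mem_rowStab t0, 𝔡⁻¹ * σ * 𝔡, (actT_TOf_eq_iff t0).1 h, by group⟩

lemma conj_mem_symB_of_colRepeatD (hT : ColRepeatD (TOf t0 α β 𝔡)) {σ : Sym n}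
    (hσ : σ ∈ colStab t0) (hfix : actT t0 σ (TOf t0 α β 𝔡) = TOf t0 α β 𝔡) :
    𝔡⁻¹ * σ * 𝔡 ∈ symB n α β := by
  refine ⟨(actT_TOf_eq_iff t0).1 hfix, fun i hi => ?_⟩
  by_contra hne
  -- `𝔡 i` and `σ (𝔡 i)` would be two entries of one column of `t0` carrying the same colour
  -- `c_k` in `T_𝔡`.
  have hmoved : σ (𝔡 i) ≠ 𝔡 i := fun h => hne (by simp [h])
  have hcol : ((t0.symm (𝔡 i)).2 : ℕ) = (t0.symm (σ (𝔡 i))).2 := (hσ (𝔡 i)).symm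
  have hrow : (t0.symm (𝔡 i)).1 ≠ (t0.symm (σ (𝔡 i))).1 :=
    fun h => hmoved (t0.symm.injective (Cell.ext h hcol)).symm
  have hsame : TOf t0 α β 𝔡 (t0.symm (𝔡 i)) = TOf t0 α β 𝔡 (t0.symm (σ (𝔡 i))) := by
    simpa [actT] using congrFun hfix (t0.symm (σ (𝔡 i)))
  obtain ⟨k, hk⟩ := hT _ _ hcol hrow hsame
  rw [TOf_symm_apply, colourOfIdx_of_lt_sum α β hi] at hk
  exact cCol_ne_dCol _ _ hk

lemma sign_mul_eps_eq_one (hT : ColRepeatD (TOf t0 α β 𝔡)) {ε : Sym n → ℤ}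
    (hε : IsEps t0 α β 𝔡 ε) {σ : Sym n} (hσ : σ ∈ colStab t0)
    (hfix : actT t0 σ (TOf t0 α β 𝔡) = TOf t0 α β 𝔡) :
    (Perm.sign σ : ℤ) * ε (σ * 𝔡) = 1 := by
  have hεσ : ε (σ * 𝔡) = Perm.sign (𝔡⁻¹ * σ * 𝔡) := by
    convert hε 1 (one_mem_rowStab t0) 1 one_mem_symA _
      (conj_mem_symB_of_colRepeatD t0 hT hσ hfix) using 2
    group
  rw [hεσ, map_mul, map_mul, map_inv, inv_mul_cancel_comm, ← Units.val_mul,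
    Int.units_mul_self, Units.val_one]

lemma coeffA_self_eq_card (hrow : RowSemistd (TOf t0 α β 𝔡))
    (hcol : ColRepeatD (TOf t0 α β 𝔡)) {ε : Sym n → ℤ} (hε : IsEps t0 α β 𝔡 ε) :
    coeffA t0 α β ε 𝔡 𝔡 =
      (univ.filter fun σ => σ ∈ colStab t0 ∧ actT t0 σ (TOf t0 α β 𝔡) = TOf t0 α β 𝔡).card := by
  rw [coeffA, natCast_card_filter]
  refine sum_congr rfl fun σ _ => ?_
  by_cases hσ : σ ∈ colStab t0
  · simp only [hσ, true_and, mul_mem_dCoset_iff t0 hrow hσ]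
    split_ifs with hfix
    exacts [sign_mul_eps_eq_one t0 hcol hε hσ hfix, rfl]
  · simp [hσ]

end Tableaux

theorem coeffA_diagonal_general (n : ℕ) (lam : List ℕ)
    (α β : List ℕ) (t0 : Tab n lam) (𝔡 : Sym n)
    (hss : IsSemistd (TOf t0 α β 𝔡))
    (ε : Sym n → ℤ) (hε : IsEps t0 α β 𝔡 ε) :
    coeffA t0 α β ε 𝔡 𝔡 =
      (Nat.card {σ : Sym n // σ ∈ colStab t0 ∧
        actT t0 σ (TOf t0 α β 𝔡) = TOf t0 α β 𝔡} : ℤ) ∧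
    coeffA t0 α β ε 𝔡 𝔡 =
      (Nat.card ↥(colStab t0 ∩
        {x : Sym n | ∃ ξ ∈ youngSubgroup n (α ++ β), x = 𝔡 * ξ * 𝔡⁻¹}) : ℤ) ∧
    0 < coeffA t0 α β ε 𝔡 𝔡 := by
  have hcard : coeffA t0 α β ε 𝔡 𝔡 = (Nat.card {σ : Sym n // σ ∈ colStab t0 ∧
      actT t0 σ (TOf t0 α β 𝔡) = TOf t0 α β 𝔡} : ℤ) := by
    rw [coeffA_self_eq_card t0 hss.1 hss.2.2.2 hε, Nat.card_eq_fintype_card,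
      Fintype.card_subtype]
  have hstab (σ : Sym n) : σ ∈ colStab t0 ∧ actT t0 σ (TOf t0 α β 𝔡) = TOf t0 α β 𝔡 ↔
      σ ∈ colStab t0 ∩ {x | ∃ ξ ∈ youngSubgroup n (α ++ β), x = 𝔡 * ξ * 𝔡⁻¹} := by
    rw [actT_TOf_eq_iff, conj_mem_youngSubgroup_iff]
    rfl
  have : Nonempty {σ : Sym n // σ ∈ colStab t0 ∧ actT t0 σ (TOf t0 α β 𝔡) = TOf t0 α β 𝔡} :=
    ⟨1, one_mem_colStab t0, actT_one t0 _⟩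
  refine ⟨hcard, hcard.trans ?_, hcard ▸ mod_cast Nat.card_pos⟩
  rw [Nat.card_congr (Equiv.subtypeEquivRight hstab)]

/-- **Diagonal coefficient (Lemma 4.5).** If `𝔡 ∈ ℛ` and `T_𝔡` is semistandard, then
`𝔞_{𝔡,𝔡} = |stab_{C_{t0}}(T_𝔡)| = |C_{t0} ∩ 𝔡 Sym_{α|β} 𝔡⁻¹|`; in particular it is a
positive integer. -/
theorem coeffA_diagonal (n : ℕ) (lam : List ℕ) (hl : IsPartition n lam)
    (α β : List ℕ) (hab : IsBicomp n α β) (t0 : Tab n lam) (𝔡 : Sym n)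
    (h𝔡 : 𝔡 ∈ RSet t0 α β) (hss : IsSemistd (TOf t0 α β 𝔡))
    (hty : HasType α β (TOf t0 α β 𝔡))
    (ε : Sym n → ℤ) (hε : IsEps t0 α β 𝔡 ε) :
    coeffA t0 α β ε 𝔡 𝔡 =
      (Nat.card {σ : Sym n // σ ∈ colStab t0 ∧
        actT t0 σ (TOf t0 α β 𝔡) = TOf t0 α β 𝔡} : ℤ) ∧
    coeffA t0 α β ε 𝔡 𝔡 =
      (Nat.card ↥(colStab t0 ∩
        {x : Sym n | ∃ ξ ∈ youngSubgroup n (α ++ β), x = 𝔡 * ξ * 𝔡⁻¹}) : ℤ) ∧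
    0 < coeffA t0 α β ε 𝔡 𝔡 :=
  coeffA_diagonal_general n lam α β t0 𝔡 hss ε hε

end SignedYoung
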